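/- arXiv:2305.12309 — 2 statements merged into one kernel-verified Lean document; each statement's English description precedes it below -/
import Mathlib

section
/- (Proposition 1, existence) Under uniform pricing with zero price bids, assume ∑ᵢ yᵢ*(p̄) > D. Then any quantity profile q* with ∑ᵢ qᵢ* = D and 0 ≤ qᵢ* ≤ yᵢ*(p̄) for all i is a pure Nash equilibrium, and its clearing price is p̄: for every supplier i, every unilateral deviation qᵢ' ≥ 0, and every allocation consistent with the mechanism after the deviation, supplier i's payoff does not exceed its equilibrium payoff Rᵢ(qᵢ*; p̄). -/
/-!
Since `∑ qᵢ* = D`, the market clears at the price cap `p̄`. A supplier's expected profit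
`R(x; p̄)` has slope `p̄ − λ F(x)`, which is nonnegative up to `y*(p̄)`, so on `[0, qᵢ*]` the
profit is increasing. Bidding less keeps the price at `p̄` but lowers the commitment, hence
the profit; bidding more drops the price to `0`, where every commitment yields a profit
`≤ 0 = R(0; p̄) ≤ R(qᵢ*; p̄)`.
-/

open MeasureTheory Set

/-- The cumulative distribution function `F(t) = P(X ≤ t)` of a random variable `X`. -/
noncomputable def cdfOf {Ω : Type*} [MeasurableSpace Ω] (μ : Measure Ω) (X : Ω → ℝ) (t : ℝ) : ℝ :=
  (μ {ω | X ω ≤ t}).toReal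

/-- The generalized inverse `F⁻¹(u) = inf {t ≥ 0 : F(t) ≥ u}`. -/
noncomputable def geninv (F : ℝ → ℝ) (u : ℝ) : ℝ :=
  sInf {t : ℝ | 0 ≤ t ∧ u ≤ F t}

/-- The optimal commitment function `y*(π) = F⁻¹(min(π/λ, 1))`. -/
noncomputable def ystar (F : ℝ → ℝ) (lam : ℝ) (pr : ℝ) : ℝ :=
  geninv F (min (pr / lam) 1)

/-- The expected profit `R(x; π) = x·π − λ·E[(x − X)⁺]` of a supplier paid day-ahead
price `π` for committed quantity `x`, with real-time penalty price `λ`. -/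
noncomputable def profit {Ω : Type*} [MeasurableSpace Ω] (μ : Measure Ω) (X : Ω → ℝ)
    (lam : ℝ) (pr : ℝ) (x : ℝ) : ℝ :=
  x * pr - lam * ∫ ω, max (x - X ω) 0 ∂μ

open Filter Topology

theorem apply_le_of_le_geninv {F : ℝ → ℝ} (hmono : Monotone F) (hcont : Continuous F)
    {u : ℝ} (hF0 : F 0 < u) {b : ℝ} (hb : b ≤ geninv F u) : F b ≤ u := by
  by_contra! hlt
  have hb0 : 0 < b := by
    by_contra! hb0
    linarith [hmono hb0]
  have hnear : ∀ᶠ t in 𝓝[<] b, u < F t ∧ t ∈ Ioo 0 b :=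
    (eventually_nhdsWithin_of_eventually_nhds
      (hcont.continuousAt.eventually (lt_mem_nhds hlt))).and
      (Ioo_mem_nhdsLT hb0)
  obtain ⟨c, hFc, hc0, hcb⟩ := hnear.exists
  have : geninv F u ≤ c := csInf_le ⟨0, fun t ht => ht.1⟩ ⟨hc0.le, hFc.le⟩
  linarith

theorem mul_apply_le_of_le_ystar {F : ℝ → ℝ} (hmono : Monotone F) (hcont : Continuous F)
    (hF0 : F 0 ≤ 0) {lam pr : ℝ} (hlam : 0 < lam) (hpr : 0 < pr) {x : ℝ}
    (hx : x ≤ ystar F lam pr) : lam * F x ≤ pr := by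
  have hu : 0 < min (pr / lam) 1 := lt_min (div_pos hpr hlam) one_pos
  have hFx : F x ≤ pr / lam :=
    (apply_le_of_le_geninv hmono hcont (hF0.trans_lt hu) hx).trans (min_le_left _ _)
  rwa [le_div_iff₀ hlam, mul_comm] at hFx

section Profit

variable {Ω : Type*} [MeasurableSpace Ω] (μ : Measure Ω) {X : Ω → ℝ}

theorem cdfOf_monotone [IsFiniteMeasure μ] (X : Ω → ℝ) : Monotone (cdfOf μ X) :=
  fun _ _ hab => ENNReal.toReal_mono (measure_ne_top μ _)
    (measure_mono fun _ hω => le_trans hω hab)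

theorem integrable_max_sub_zero [IsFiniteMeasure μ] (hX : Measurable X)
    (hXnn : ∀ ω, 0 ≤ X ω) (x : ℝ) : Integrable (fun ω => max (x - X ω) 0) μ := by
  refine (integrable_const (max x 0)).mono' ?_ (ae_of_all _ fun ω => ?_)
  · exact ((measurable_const.sub hX).max measurable_const).aestronglyMeasurable
  · rw [Real.norm_eq_abs, abs_of_nonneg (le_max_right _ _)]
    exact max_le_max (by linarith [hXnn ω]) le_rfl

theorem max_sub_zero_sub_le_indicator {a b : ℝ} (hab : a ≤ b) (y : ℝ) :
    max (b - y) 0 - max (a - y) 0 ≤ {y | y ≤ b}.indicator (fun _ => b - a) y := by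
  by_cases hy : y ≤ b
  · rw [indicator_of_mem (show y ∈ {y | y ≤ b} from hy)]
    simp only [max_def]
    split_ifs <;> linarith
  · rw [indicator_of_notMem (show y ∉ {y | y ≤ b} from hy), max_eq_right (by linarith),
      max_eq_right (by linarith)]
    simp

theorem profit_le_profit_of_mul_cdfOf_le [IsFiniteMeasure μ] (hX : Measurable X)
    (hXnn : ∀ ω, 0 ≤ X ω) {lam pr : ℝ} (hlam : 0 ≤ lam) {a b : ℝ} (hab : a ≤ b)
    (hFb : lam * cdfOf μ X b ≤ pr) : profit μ X lam pr a ≤ profit μ X lam pr b := by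
  have hia := integrable_max_sub_zero μ hX hXnn a
  have hib := integrable_max_sub_zero μ hX hXnn b
  have hs : MeasurableSet {ω | X ω ≤ b} := measurableSet_le hX measurable_const
  have hshortfall : ∫ ω, max (b - X ω) 0 ∂μ - ∫ ω, max (a - X ω) 0 ∂μ
      ≤ (b - a) * cdfOf μ X b := by
    rw [← integral_sub hib hia]
    calc ∫ ω, (max (b - X ω) 0 - max (a - X ω) 0) ∂μ
        ≤ ∫ ω, {ω | X ω ≤ b}.indicator (fun _ => b - a) ω ∂μ :=
          integral_mono (hib.sub hia) ((integrable_const (b - a)).indicator hs)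
            fun ω => max_sub_zero_sub_le_indicator hab (X ω)
      _ = (b - a) * cdfOf μ X b := by
          rw [integral_indicator_const _ hs, cdfOf, smul_eq_mul, mul_comm, measureReal_def]
  unfold profit
  nlinarith [mul_le_mul_of_nonneg_left hshortfall hlam,
    mul_le_mul_of_nonneg_left hFb (sub_nonneg.mpr hab)]

theorem profit_zero (hXnn : ∀ ω, 0 ≤ X ω) (lam pr : ℝ) : profit μ X lam pr 0 = 0 := by
  have hshortfall : (fun ω => max (0 - X ω) 0) = fun _ => 0 :=
    funext fun ω => max_eq_right (by linarith [hXnn ω])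
  unfold profit
  rw [hshortfall]
  simp

theorem profit_zero_price_nonpos {lam : ℝ} (hlam : 0 ≤ lam) (x : ℝ) :
    profit μ X lam 0 x ≤ 0 := by
  have : 0 ≤ ∫ ω, max (x - X ω) 0 ∂μ := integral_nonneg fun _ => le_max_right _ _
  simp only [profit, mul_zero, zero_sub, neg_nonpos]
  positivity

end Profit

theorem le_of_sum_update_le_sum {ι : Type*} [Fintype ι] [DecidableEq ι] {q : ι → ℝ} {i : ι}
    {a : ℝ} (h : ∑ k, Function.update q i a k ≤ ∑ k, q k) : a ≤ q i := by
  rw [Finset.sum_update_of_mem (Finset.mem_univ i),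
    Finset.sum_eq_add_sum_sdiff_singleton_of_mem (Finset.mem_univ i)] at h
  linarith

theorem up_zero_bid_equilibrium_existence_general
    {Ω : Type*} [MeasurableSpace Ω] (μ : Measure Ω) [IsProbabilityMeasure μ]
    (I : ℕ)
    (X : Fin I → Ω → ℝ) (hX : ∀ i, Measurable (X i)) (hXnn : ∀ i ω, 0 ≤ X i ω)
    (hFc : ∀ i, Continuous (cdfOf μ (X i)))
    (hF0 : ∀ i, cdfOf μ (X i) 0 = 0)
    (lam : ℝ) (hlam : 0 < lam) (pbar : ℝ) (hpbar : 0 < pbar)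
    (D : ℝ)
    (q : Fin I → ℝ) (hqsum : ∑ i, q i = D)
    (hq : ∀ i, 0 ≤ q i ∧ q i ≤ ystar (cdfOf μ (X i)) lam pbar) :
    -- at the profile `q`, the market clears at the price cap `p̄`
    ((if (∑ i, q i) ≤ D then pbar else 0) = pbar) ∧
    -- no unilateral deviation is profitable
    ∀ i : Fin I, ∀ qi' : ℝ, 0 ≤ qi' →
      (((∑ k, Function.update q i qi' k) ≤ D →
          profit μ (X i) lam pbar qi' ≤ profit μ (X i) lam pbar (q i)) ∧
       (D < (∑ k, Function.update q i qi' k) →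
          ∀ x : Fin I → ℝ,
            (∀ k, 0 ≤ x k ∧ x k ≤ Function.update q i qi' k) → (∑ k, x k) = D →
            profit μ (X i) lam 0 (x i) ≤ profit μ (X i) lam pbar (q i))) := by
  have hFq : ∀ i, lam * cdfOf μ (X i) (q i) ≤ pbar := fun i =>
    mul_apply_le_of_le_ystar (cdfOf_monotone μ (X i)) (hFc i) (hF0 i).le hlam hpbar (hq i).2
  have hmono : ∀ i {a}, a ≤ q i → profit μ (X i) lam pbar a ≤ profit μ (X i) lam pbar (q i) :=
    fun i _ ha => profit_le_profit_of_mul_cdfOf_le μ (hX i) (hXnn i) hlam.le ha (hFq i)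
  refine ⟨by simp [hqsum], fun i qi' _ => ⟨fun hle => ?_, fun _ x _ _ => ?_⟩⟩
  · exact hmono i (le_of_sum_update_le_sum (hqsum ▸ hle))
  · calc profit μ (X i) lam 0 (x i) ≤ 0 := profit_zero_price_nonpos μ hlam.le _
      _ = profit μ (X i) lam pbar 0 := (profit_zero μ (hXnn i) _ _).symm
      _ ≤ profit μ (X i) lam pbar (q i) := hmono i (hq i).1

/-- Proposition 1 (existence): under uniform pricing with zero price bids, if
`∑ᵢ yᵢ*(p̄) > D`, then any quantity profile `q*` with `∑ᵢ qᵢ* = D` and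
`0 ≤ qᵢ* ≤ yᵢ*(p̄)` is a pure Nash equilibrium with clearing price `p̄`: no unilateral
deviation (under any allocation consistent with the mechanism) yields a payoff above the
equilibrium payoff `Rᵢ(qᵢ*; p̄)`. -/
theorem up_zero_bid_equilibrium_existence
    {Ω : Type*} [MeasurableSpace Ω] (μ : Measure Ω) [IsProbabilityMeasure μ]
    (I : ℕ) (hI : 2 ≤ I)
    (X : Fin I → Ω → ℝ) (hX : ∀ i, Measurable (X i)) (hXnn : ∀ i ω, 0 ≤ X i ω)
    (Xbar : Fin I → ℝ) (hXbar : ∀ i, 0 < Xbar i)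
    (hsupp : ∀ i, μ {ω | X i ω ≤ Xbar i} = 1)
    (hFc : ∀ i, Continuous (cdfOf μ (X i)))
    (hF0 : ∀ i, cdfOf μ (X i) 0 = 0) (hF1 : ∀ i, cdfOf μ (X i) (Xbar i) = 1)
    (lam : ℝ) (hlam : 0 < lam) (pbar : ℝ) (hpbar : 0 < pbar)
    (D : ℝ) (hD : 0 < D)
    (hadeq : D < ∑ i, ystar (cdfOf μ (X i)) lam pbar)
    (q : Fin I → ℝ) (hqsum : ∑ i, q i = D)
    (hq : ∀ i, 0 ≤ q i ∧ q i ≤ ystar (cdfOf μ (X i)) lam pbar) :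
    -- at the profile `q`, the market clears at the price cap `p̄`
    ((if (∑ i, q i) ≤ D then pbar else 0) = pbar) ∧
    -- no unilateral deviation is profitable
    ∀ i : Fin I, ∀ qi' : ℝ, 0 ≤ qi' →
      (((∑ k, Function.update q i qi' k) ≤ D →
          profit μ (X i) lam pbar qi' ≤ profit μ (X i) lam pbar (q i)) ∧
       (D < (∑ k, Function.update q i qi' k) →
          ∀ x : Fin I → ℝ,
            (∀ k, 0 ≤ x k ∧ x k ≤ Function.update q i qi' k) → (∑ k, x k) = D →
            profit μ (X i) lam 0 (x i) ≤ profit μ (X i) lam pbar (q i))) :=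
  up_zero_bid_equilibrium_existence_general μ I X hX hXnn hFc hF0 lam hlam pbar hpbar D q hqsum hq
end

section
/- (RUP profit positivity) Suppose F is continuous and strictly increasing on [0, X̄] with F(0) = 0 and F(X̄) = 1. Then for any price π with 0 < π ≤ λ, the supplier's expected profit at the commitment y*(π) is strictly positive: π·y*(π) − λ·E[(y*(π) − X)⁺] > 0. -/
open MeasureTheory Set

/-! Write `u = π/λ` and `y = F⁻¹(u)`. By continuity of `F`, `F y = u`, `F t < u` for
`0 ≤ t < y`, and `y > 0` since `F 0 = 0 < u`. Since `X ≥ 0`, for `ε ≤ y` one has pointwise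
`(y - X)⁺ ≤ (y - ε)·1{X ≤ y} + ε·1{X ≤ ε}`, hence `E[(y - X)⁺] ≤ (y - ε) u + ε F ε`. At `ε = y/2`
the profit `λ u y - λ E[(y - X)⁺]` is therefore at least `λ (y/2) (u - F (y/2)) > 0`. -/

section GeneralizedInverse

variable {F : ℝ → ℝ} {u : ℝ}

lemma geninv_nonneg : 0 ≤ geninv F u :=
  Real.sInf_nonneg fun _ ht => ht.1

lemma bddBelow_geninv_set : BddBelow {t : ℝ | 0 ≤ t ∧ u ≤ F t} :=
  ⟨0, fun _ ht => ht.1⟩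

lemma le_apply_geninv (hF : Continuous F) (hu : ∃ t, 0 ≤ t ∧ u ≤ F t) :
    u ≤ F (geninv F u) := by
  have hclosed : IsClosed {t : ℝ | 0 ≤ t ∧ u ≤ F t} :=
    (isClosed_le continuous_const continuous_id).inter (isClosed_le continuous_const hF)
  exact (hclosed.csInf_mem hu bddBelow_geninv_set).2

lemma apply_lt_of_lt_geninv {t : ℝ} (ht0 : 0 ≤ t) (ht : t < geninv F u) : F t < u :=
  lt_of_not_ge fun h => notMem_of_lt_csInf ht bddBelow_geninv_set ⟨ht0, h⟩

/-- An intermediate value `c ≤ F⁻¹(u)` with `F c = u` lies in the set defining `F⁻¹(u)`,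
so it is `F⁻¹(u)` itself. -/
lemma apply_geninv_eq (hF : Continuous F) (h0 : F 0 ≤ u) (hu : ∃ t, 0 ≤ t ∧ u ≤ F t) :
    F (geninv F u) = u := by
  obtain ⟨c, ⟨hc0, hcy⟩, hFc⟩ := intermediate_value_Icc geninv_nonneg hF.continuousOn
    ⟨h0, le_apply_geninv hF hu⟩
  obtain rfl : c = geninv F u := hcy.antisymm (csInf_le bddBelow_geninv_set ⟨hc0, hFc.ge⟩)
  exact hFc

lemma geninv_pos (hF : Continuous F) (h0 : F 0 < u) (hu : ∃ t, 0 ≤ t ∧ u ≤ F t) :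
    0 < geninv F u := by
  refine geninv_nonneg.lt_of_ne fun h => h0.not_ge ?_
  simpa only [← h] using le_apply_geninv hF hu

end GeneralizedInverse

section Shortfall

lemma posPart_sub_le_indicator {x y ε : ℝ} (hx : 0 ≤ x) (hεy : ε ≤ y) :
    max (y - x) 0 ≤ (Iic y).indicator (fun _ => y - ε) x + (Iic ε).indicator (fun _ => ε) x := by
  simp only [indicator_apply, mem_Iic]
  split_ifs <;> exact max_le (by linarith) (by linarith)

lemma integral_posPart_sub_le {Ω : Type*} [MeasurableSpace Ω] (μ : Measure Ω) [IsFiniteMeasure μ]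
    {X : Ω → ℝ} (hX : Measurable X) (hXnn : ∀ ω, 0 ≤ X ω) {y ε : ℝ} (hεy : ε ≤ y) :
    ∫ ω, max (y - X ω) 0 ∂μ ≤ (y - ε) * cdfOf μ X y + ε * cdfOf μ X ε := by
  have hmeas (t : ℝ) : MeasurableSet (X ⁻¹' Iic t) := hX measurableSet_Iic
  have hint (t c : ℝ) : Integrable ((X ⁻¹' Iic t).indicator fun _ => c) μ :=
    (integrable_const c).indicator (hmeas t)
  calc ∫ ω, max (y - X ω) 0 ∂μ
      ≤ ∫ ω, ((X ⁻¹' Iic y).indicator (fun _ => y - ε) ω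
          + (X ⁻¹' Iic ε).indicator (fun _ => ε) ω) ∂μ :=
        integral_mono_of_nonneg (.of_forall fun _ => le_max_right _ _)
          ((hint y _).add (hint ε _)) (.of_forall fun ω => posPart_sub_le_indicator (hXnn ω) hεy)
    _ = (y - ε) * cdfOf μ X y + ε * cdfOf μ X ε := by
        rw [integral_add (hint y _) (hint ε _), integral_indicator_const _ (hmeas y),
          integral_indicator_const _ (hmeas ε), smul_eq_mul, smul_eq_mul, mul_comm, mul_comm ε]
        rfl

end Shortfall

theorem rup_profit_positive_general
    {Ω : Type*} [MeasurableSpace Ω] (μ : Measure Ω) [IsProbabilityMeasure μ]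
    (X : Ω → ℝ) (hX : Measurable X) (hXnn : ∀ ω, 0 ≤ X ω)
    (Xbar : ℝ) (hXbar : 0 < Xbar)
    (hFc : Continuous (cdfOf μ X)) (hF0 : cdfOf μ X 0 = 0) (hF1 : cdfOf μ X Xbar = 1)
    (lam : ℝ) (hlam : 0 < lam) (pr : ℝ) (hpr0 : 0 < pr) (hprl : pr ≤ lam) :
    0 < pr * ystar (cdfOf μ X) lam pr
        - lam * ∫ ω, max (ystar (cdfOf μ X) lam pr - X ω) 0 ∂μ := by
  set F := cdfOf μ X
  set u := pr / lam
  have hu0 : 0 < u := div_pos hpr0 hlam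
  have hu1 : u ≤ 1 := (div_le_one hlam).mpr hprl
  have hpr : pr = lam * u := (mul_div_cancel₀ pr hlam.ne').symm
  have hS : ∃ t, 0 ≤ t ∧ u ≤ F t := ⟨Xbar, hXbar.le, hF1 ▸ hu1⟩
  have hy : ystar F lam pr = geninv F u := by rw [ystar, min_eq_left hu1]
  set y := geninv F u
  have hFy : F y = u := apply_geninv_eq hFc (hF0.symm ▸ hu0.le) hS
  have hy0 : 0 < y := geninv_pos hFc (hF0.symm ▸ hu0) hS
  have hFhalf : F (y / 2) < u := apply_lt_of_lt_geninv (half_pos hy0).le (half_lt_self hy0)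
  have hbound := integral_posPart_sub_le μ hX hXnn (half_le_self hy0.le)
  rw [hy]
  calc 0 < lam * (y / 2 * (u - F (y / 2))) := mul_pos hlam (mul_pos (half_pos hy0) (by linarith))
    _ = pr * y - lam * ((y - y / 2) * F y + y / 2 * F (y / 2)) := by rw [hFy, hpr]; ring
    _ ≤ pr * y - lam * ∫ ω, max (y - X ω) 0 ∂μ := by gcongr

/-- RUP profit positivity: if `F` is continuous and strictly increasing on `[0, X̄]` with
`F(0) = 0` and `F(X̄) = 1`, then for any price `π` with `0 < π ≤ λ` the supplier's expected
profit at the commitment `y*(π)` is strictly positive. -/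
theorem rup_profit_positive
    {Ω : Type*} [MeasurableSpace Ω] (μ : Measure Ω) [IsProbabilityMeasure μ]
    (X : Ω → ℝ) (hX : Measurable X) (hXnn : ∀ ω, 0 ≤ X ω)
    (Xbar : ℝ) (hXbar : 0 < Xbar) (hsupp : μ {ω | X ω ≤ Xbar} = 1)
    (hFc : Continuous (cdfOf μ X)) (hF0 : cdfOf μ X 0 = 0) (hF1 : cdfOf μ X Xbar = 1)
    (hFstrict : StrictMonoOn (cdfOf μ X) (Set.Icc (0:ℝ) Xbar))
    (lam : ℝ) (hlam : 0 < lam) (pr : ℝ) (hpr0 : 0 < pr) (hprl : pr ≤ lam) :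
    0 < pr * ystar (cdfOf μ X) lam pr
        - lam * ∫ ω, max (ystar (cdfOf μ X) lam pr - X ω) 0 ∂μ :=
  rup_profit_positive_general μ X hX hXnn Xbar hXbar hFc hF0 hF1 lam hlam pr hpr0 hprl
end
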